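/- arXiv:1207.2982 — 2 statements merged into one kernel-verified Lean document; each statement's English description precedes it below -/
import Mathlib

section
/- With p = (q₁⁻,q₂⁺,q₃⁻,q₄⁺) and p̃ = (q̃₁⁻,q̃₂⁺,q̃₃⁻,q̃₄⁺), the inequality −g_q(x,q)·(q̃ − q) ≥ −β|p|^{β−2} p·(p̃ − p) = −G_p(p)·(p̃ − p) holds for all q, q̃ ∈ ℝ⁴. -/
/-!
Coordinatewise, `a⁺ (b⁺ - a⁺) - a⁺ (b - a) = a⁺ b⁻ ≥ 0`, and likewise with negative parts;
summing the four coordinates and multiplying by the nonnegative factor `β |p|^(β-2)` gives the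
inequality.
-/

open Real Finset

/-- Euclidean norm on `ℝ⁴`. -/
noncomputable def nrm (p : Fin 4 → ℝ) : ℝ := (∑ i, p i ^ 2) ^ ((1 : ℝ) / 2)

/-- Dot product on `ℝ⁴`. -/
def dot (p r : Fin 4 → ℝ) : ℝ := ∑ i, p i * r i

/-- `p = (q₁⁻, q₂⁺, q₃⁻, q₄⁺)`. -/
noncomputable def pvec (q : Fin 4 → ℝ) : Fin 4 → ℝ :=
  ![max (-(q 0)) 0, max (q 1) 0, max (-(q 2)) 0, max (q 3) 0]

/-- `G(p) = |p|^β`. -/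
noncomputable def Gfun (β : ℝ) (p : Fin 4 → ℝ) : ℝ := nrm p ^ β

/-- `G_p(p) · v = β |p|^(β-2) p · v`. -/
noncomputable def Gp (β : ℝ) (p v : Fin 4 → ℝ) : ℝ := β * nrm p ^ (β - 2) * dot p v

/-- The numerical Hamiltonian `g(x,q) = H(x) + G(q₁⁻, q₂⁺, q₃⁻, q₄⁺)`. -/
noncomputable def gfun (β : ℝ) (H : ℝ × ℝ → ℝ) (x : ℝ × ℝ) (q : Fin 4 → ℝ) : ℝ :=
  H x + Gfun β (pvec q)

/-- The gradient of `g` w.r.t. `q`, applied to `r`: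
`g_q(x,q) · r = β |p|^(β-2) (−p₁ r₁ + p₂ r₂ − p₃ r₃ + p₄ r₄)` where `p = pvec q`. -/
noncomputable def gq (β : ℝ) (q r : Fin 4 → ℝ) : ℝ :=
  β * nrm (pvec q) ^ (β - 2) *
    (-(pvec q 0) * r 0 + pvec q 1 * r 1 - pvec q 2 * r 2 + pvec q 3 * r 3)

theorem max_zero_mul_sub_le {α : Type*} [Ring α] [LinearOrder α] [IsStrictOrderedRing α]
    (a b : α) : max a 0 * (b - a) ≤ max a 0 * (max b 0 - max a 0) := by
  rcases le_total 0 a with ha | ha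
  · rw [max_eq_left ha]
    exact mul_le_mul_of_nonneg_left (sub_le_sub_right (le_max_left b 0) a) ha
  · simp only [max_eq_right ha, zero_mul, le_refl]

theorem max_neg_zero_mul_sub_le {α : Type*} [Ring α] [LinearOrder α] [IsStrictOrderedRing α]
    (a b : α) : max (-a) 0 * (a - b) ≤ max (-a) 0 * (max (-b) 0 - max (-a) 0) := by
  simpa only [neg_sub_neg] using max_zero_mul_sub_le (-a) (-b)

theorem nrm_nonneg (p : Fin 4 → ℝ) : 0 ≤ nrm p :=
  rpow_nonneg (by positivity) _

theorem signed_dot_sub_le_dot_pvec_sub (q qt : Fin 4 → ℝ) :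
    -(pvec q 0) * (qt - q) 0 + pvec q 1 * (qt - q) 1 - pvec q 2 * (qt - q) 2
        + pvec q 3 * (qt - q) 3 ≤ dot (pvec q) (pvec qt - pvec q) := by
  have h0 := max_neg_zero_mul_sub_le (q 0) (qt 0)
  have h1 := max_zero_mul_sub_le (q 1) (qt 1)
  have h2 := max_neg_zero_mul_sub_le (q 2) (qt 2)
  have h3 := max_zero_mul_sub_le (q 3) (qt 3)
  simp only [dot, Fin.sum_univ_four, pvec, Pi.sub_apply, Matrix.cons_val_zero,
    Matrix.cons_val_one, Matrix.head_cons, Matrix.cons_val_two, Matrix.tail_cons,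
    Matrix.cons_val_three]
  linarith

theorem gq_sub_le_Gp_pvec_sub {β : ℝ} (hβ : 0 ≤ β) (q qt : Fin 4 → ℝ) :
    gq β q (qt - q) ≤ Gp β (pvec q) (pvec qt - pvec q) :=
  mul_le_mul_of_nonneg_left (signed_dot_sub_le_dot_pvec_sub q qt)
    (mul_nonneg hβ (rpow_nonneg (nrm_nonneg _) _))

/-- `−g_q(x,q)·(qt − q) ≥ −β|p|^(β−2) p·(pt − p) = −G_p(p)·(pt − p)` for all `q, qt ∈ ℝ⁴`,
with `p = pvec q`, `pt = pvec qt`. -/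
theorem neg_gq_ge (β : ℝ) (hβ : 1 < β) (q qt : Fin 4 → ℝ) :
    -gq β q (qt - q) ≥ -(β * nrm (pvec q) ^ (β - 2) * dot (pvec q) (pvec qt - pvec q)) ∧
    -(β * nrm (pvec q) ^ (β - 2) * dot (pvec q) (pvec qt - pvec q))
      = -Gp β (pvec q) (pvec qt - pvec q) :=
  ⟨neg_le_neg (gq_sub_le_Gp_pvec_sub (zero_lt_one.trans hβ).le q qt), rfl⟩
end

section
/- For 1 < β < 2 and G(p) = |p|^β on ℝ⁴, for all p, p̃ ∈ (ℝ₊)⁴ with p + p̃ ≠ 0: G(p̃) − G(p) − G_p(p)·(p̃ − p) ≥ 2^{β−3} β(β−1) min(|p|_∞^{β−2}, |p̃|_∞^{β−2}) |p − p̃|², where |·|_∞ is the max norm. -/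
open Real Finset

/-- The max norm `|p|_∞` on `ℝ⁴`. -/
def nrmInf (p : Fin 4 → ℝ) : ℝ := max (max |p 0| |p 1|) (max |p 2| |p 3|)

/-!
On the segment from `p` to `p̃`, `φ(s) = |p + s (p̃ - p)| ^ β = Q(s) ^ (β / 2)` where `Q` is a
quadratic whose discriminant is nonpositive by Cauchy–Schwarz. This gives
`φ'' ≥ β (β - 1) Q ^ (β / 2 - 1) |p̃ - p|²`, and since `β / 2 - 1 ≤ 0` and
`Q ≤ (2 max(|p|_∞, |p̃|_∞))²` on the segment, a second-order Taylor bound for `φ` on `[0, 1]` gives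
the inequality. Points of the closed positive orthant span segments avoiding `0`, where `φ` is
smooth, unless one of them is `0`; then `0 ^ (β - 2) = 0` makes the right-hand side vanish.
-/

lemma monotoneOn_Icc_of_hasDerivAt_nonneg {a b : ℝ} {f f' : ℝ → ℝ}
    (hf : ∀ s ∈ Set.Icc a b, HasDerivAt f (f' s) s) (hf' : ∀ s ∈ Set.Icc a b, 0 ≤ f' s) :
    MonotoneOn f (Set.Icc a b) :=
  monotoneOn_of_hasDerivWithinAt_nonneg (convex_Icc a b)
    (fun s hs ↦ (hf s hs).continuousAt.continuousWithinAt)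
    (fun s hs ↦ (hf s (interior_subset hs)).hasDerivWithinAt)
    (fun s hs ↦ hf' s (interior_subset hs))

theorem add_add_div_two_le_of_le_second_deriv {f f' f'' : ℝ → ℝ} {c : ℝ}
    (hf : ∀ s ∈ Set.Icc (0 : ℝ) 1, HasDerivAt f (f' s) s)
    (hf' : ∀ s ∈ Set.Icc (0 : ℝ) 1, HasDerivAt f' (f'' s) s)
    (hc : ∀ s ∈ Set.Icc (0 : ℝ) 1, c ≤ f'' s) :
    f 0 + f' 0 + c / 2 ≤ f 1 := by
  have h0 : (0 : ℝ) ∈ Set.Icc (0 : ℝ) 1 := ⟨le_rfl, zero_le_one⟩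
  have h1 : (1 : ℝ) ∈ Set.Icc (0 : ℝ) 1 := ⟨zero_le_one, le_rfl⟩
  have hf'_ge : ∀ s ∈ Set.Icc (0 : ℝ) 1, f' 0 + c * s ≤ f' s := by
    have hmono := monotoneOn_Icc_of_hasDerivAt_nonneg (f := fun s ↦ f' s - c * s)
      (fun s hs ↦ ((hf' s hs).fun_sub ((hasDerivAt_id' s).const_mul c)).congr_deriv (by ring))
      (fun s hs ↦ sub_nonneg.2 (hc s hs))
    intro s hs
    linarith [hmono h0 hs hs.1]
  have hmono := monotoneOn_Icc_of_hasDerivAt_nonneg (f := fun s ↦ f s - f' 0 * s - c / 2 * s ^ 2)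
    (fun s hs ↦ (((hf s hs).fun_sub ((hasDerivAt_id' s).const_mul (f' 0))).fun_sub
      ((hasDerivAt_pow 2 s).const_mul (c / 2))).congr_deriv (by push_cast; ring))
    (fun s hs ↦ sub_nonneg.2 (hf'_ge s hs))
  linarith [hmono h0 h1 zero_le_one]

/-- The right-hand side is `(Q ^ (β / 2))''` at a point where `Q = q`, `Q' = L` and `Q'' = 2 c`. -/
lemma le_second_deriv_rpow_quadratic {β q L c : ℝ} (hβ₁ : 1 ≤ β) (hβ₂ : β ≤ 2) (hq : 0 < q)
    (hL : L ^ 2 ≤ 4 * q * c) :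
    β * (β - 1) * q ^ (β / 2 - 1) * c ≤
      β / 2 * ((β / 2 - 1) * q ^ (β / 2 - 1 - 1) * L * L + q ^ (β / 2 - 1) * (2 * c)) := by
  have hdiv : (β / 2 - 1) * (4 * c) ≤ (β / 2 - 1) * L ^ 2 / q := by
    rw [le_div_iff₀ hq, mul_assoc]
    exact mul_le_mul_of_nonpos_left (by linarith) (by linarith)
  calc β * (β - 1) * q ^ (β / 2 - 1) * c
      = β / 2 * q ^ (β / 2 - 1) * ((β / 2 - 1) * (4 * c) + 2 * c) := by ring
    _ ≤ β / 2 * q ^ (β / 2 - 1) * ((β / 2 - 1) * L ^ 2 / q + 2 * c) := by gcongr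
    _ = _ := by rw [rpow_sub_one hq.ne' (β / 2 - 1)]; field_simp

theorem le_bregman_rpow_quadratic {β a b c K : ℝ} (hβ₁ : 1 ≤ β) (hβ₂ : β ≤ 2)
    (hdisc : b ^ 2 ≤ 4 * a * c) (hpos : ∀ s ∈ Set.Icc (0 : ℝ) 1, 0 < a + b * s + c * s ^ 2)
    (hK : ∀ s ∈ Set.Icc (0 : ℝ) 1, a + b * s + c * s ^ 2 ≤ K) :
    β * (β - 1) / 2 * K ^ (β / 2 - 1) * c ≤
      (a + b + c) ^ (β / 2) - a ^ (β / 2) - β / 2 * a ^ (β / 2 - 1) * b := by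
  set Q : ℝ → ℝ := fun s ↦ a + b * s + c * s ^ 2 with hQ
  have hQ' (s : ℝ) : HasDerivAt Q (b + 2 * c * s) s :=
    (((hasDerivAt_id' s).const_mul b).const_add a).add ((hasDerivAt_pow 2 s).const_mul c)
      |>.congr_deriv (by push_cast; ring)
  have hdisc' (s : ℝ) : (b + 2 * c * s) ^ 2 ≤ 4 * Q s * c := by
    have : (b + 2 * c * s) ^ 2 - 4 * Q s * c = b ^ 2 - 4 * a * c := by ring
    linarith
  have hφ (s) (hs : s ∈ Set.Icc (0 : ℝ) 1) : HasDerivAt (fun s ↦ Q s ^ (β / 2))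
      (β / 2 * (Q s ^ (β / 2 - 1) * (b + 2 * c * s))) s :=
    ((hQ' s).rpow_const (Or.inl (hpos s hs).ne')).congr_deriv (by ring)
  have hφ' (s) (hs : s ∈ Set.Icc (0 : ℝ) 1) :
      HasDerivAt (fun s ↦ β / 2 * (Q s ^ (β / 2 - 1) * (b + 2 * c * s)))
        (β / 2 * ((β / 2 - 1) * Q s ^ (β / 2 - 1 - 1) * (b + 2 * c * s) * (b + 2 * c * s)
          + Q s ^ (β / 2 - 1) * (2 * c))) s :=
    (((hQ' s).rpow_const (Or.inl (hpos s hs).ne')).mul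
      (((hasDerivAt_id' s).const_mul (2 * c)).const_add b)).const_mul (β / 2)
      |>.congr_deriv (by ring)
  have hφ'' (s) (hs : s ∈ Set.Icc (0 : ℝ) 1) : β * (β - 1) * K ^ (β / 2 - 1) * c ≤
      β / 2 * ((β / 2 - 1) * Q s ^ (β / 2 - 1 - 1) * (b + 2 * c * s) * (b + 2 * c * s)
        + Q s ^ (β / 2 - 1) * (2 * c)) := by
    have hc : 0 ≤ c := by nlinarith [hpos 0 ⟨le_rfl, zero_le_one⟩, sq_nonneg b]
    have hKQ := rpow_le_rpow_of_nonpos (hpos s hs) (hK s hs) (by linarith : β / 2 - 1 ≤ 0)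
    refine le_trans ?_ (le_second_deriv_rpow_quadratic hβ₁ hβ₂ (hpos s hs) (hdisc' s))
    gcongr
  have htaylor := add_add_div_two_le_of_le_second_deriv hφ hφ' hφ''
  simp only [hQ] at htaylor
  norm_num at htaylor
  linarith

lemma sq_rpow_div_two {t : ℝ} (ht : 0 ≤ t) (γ : ℝ) : (t ^ 2) ^ (γ / 2) = t ^ γ := by
  rw [← rpow_natCast_mul ht]; congr 1; push_cast; ring

section InnerProductSpace

variable {E : Type*} [NormedAddCommGroup E] [InnerProductSpace ℝ E]

noncomputable def bregmanNormRpow (β : ℝ) (x y : E) : ℝ :=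
  ‖y‖ ^ β - ‖x‖ ^ β - β * ‖x‖ ^ (β - 2) * inner ℝ x (y - x)

theorem le_bregmanNormRpow {β R : ℝ} (hβ₁ : 1 ≤ β) (hβ₂ : β ≤ 2) {x y : E}
    (h0 : (0 : E) ∉ segment ℝ x y) (hR : ∀ z ∈ segment ℝ x y, ‖z‖ ≤ R) :
    β * (β - 1) / 2 * R ^ (β - 2) * ‖y - x‖ ^ 2 ≤ bregmanNormRpow β x y := by
  have hseg (s : ℝ) (hs : s ∈ Set.Icc (0 : ℝ) 1) : x + s • (y - x) ∈ segment ℝ x y := by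
    rw [segment_eq_image']; exact Set.mem_image_of_mem _ hs
  have hQ (s : ℝ) : ‖x + s • (y - x)‖ ^ 2
      = ‖x‖ ^ 2 + 2 * inner ℝ x (y - x) * s + ‖y - x‖ ^ 2 * s ^ 2 := by
    rw [norm_add_sq_real, inner_smul_right, norm_smul, mul_pow, norm_eq_abs, sq_abs]; ring
  have hdisc : (2 * inner ℝ x (y - x)) ^ 2 ≤ 4 * ‖x‖ ^ 2 * ‖y - x‖ ^ 2 := by
    have := real_inner_mul_inner_self_le x (y - x)
    rw [real_inner_self_eq_norm_sq, real_inner_self_eq_norm_sq] at this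
    linarith
  have key := le_bregman_rpow_quadratic hβ₁ hβ₂ hdisc
    (fun s hs ↦ by
      rw [← hQ]; exact pow_pos (norm_pos_iff.2 fun h ↦ h0 (h ▸ hseg s hs)) 2)
    (fun s hs ↦ by rw [← hQ]; exact pow_le_pow_left₀ (norm_nonneg _) (hR _ (hseg s hs)) 2)
  have hy : ‖x‖ ^ 2 + 2 * inner ℝ x (y - x) * 1 + ‖y - x‖ ^ 2 * 1 ^ 2 = ‖y‖ ^ 2 := by
    rw [← hQ, one_smul, add_sub_cancel]
  have hR0 : 0 ≤ R := (norm_nonneg x).trans (hR x (left_mem_segment ℝ x y))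
  rw [mul_one, one_pow, mul_one] at hy
  rw [hy, show β / 2 - 1 = (β - 2) / 2 by ring, sq_rpow_div_two hR0,
    sq_rpow_div_two (norm_nonneg _), sq_rpow_div_two (norm_nonneg _),
    sq_rpow_div_two (norm_nonneg _)] at key
  unfold bregmanNormRpow
  linarith

lemma bregmanNormRpow_zero_left {β : ℝ} (hβ : β ≠ 0) (y : E) :
    bregmanNormRpow β 0 y = ‖y‖ ^ β := by
  simp [bregmanNormRpow, zero_rpow hβ]

lemma bregmanNormRpow_zero_right {β : ℝ} (hβ : β ≠ 0) (x : E) :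
    bregmanNormRpow β x 0 = (β - 1) * ‖x‖ ^ β := by
  have h : ‖x‖ ^ (β - 2) * ‖x‖ ^ 2 = ‖x‖ ^ β := by
    rw [← rpow_natCast, ← rpow_add' (norm_nonneg x) (by simpa using hβ)]; norm_num
  simp only [bregmanNormRpow, norm_zero, zero_rpow hβ, zero_sub, inner_neg_right,
    real_inner_self_eq_norm_sq]
  linear_combination β * h

end InnerProductSpace

lemma zero_notMem_segment_of_nonneg {M : Type*} [AddCommGroup M] [PartialOrder M]
    [IsOrderedAddMonoid M] [Module ℝ M] [PosSMulMono ℝ M] [NoZeroSMulDivisors ℝ M] {x y : M}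
    (hx : 0 ≤ x) (hy : 0 ≤ y) (hx0 : x ≠ 0) (hy0 : y ≠ 0) : (0 : M) ∉ segment ℝ x y := by
  rintro ⟨a, b, ha, hb, hab, h⟩
  obtain ⟨hax, hby⟩ := (add_eq_zero_iff_of_nonneg (smul_nonneg ha hx) (smul_nonneg hb hy)).1 h
  rw [smul_eq_zero] at hax hby
  linarith [hax.resolve_right hx0, hby.resolve_right hy0]

lemma segment_toLp {ι : Type*} (x y : ι → ℝ) :
    segment ℝ (WithLp.toLp 2 x) (WithLp.toLp 2 y) = WithLp.toLp 2 '' segment ℝ x y :=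
  (image_segment ℝ (WithLp.linearEquiv 2 ℝ (ι → ℝ)).symm.toLinearMap.toAffineMap x y).symm

lemma norm_toLp_two_le {ι : Type*} [Fintype ι] (x : ι → ℝ) :
    ‖WithLp.toLp 2 x‖ ≤ √(Fintype.card ι) * ‖x‖ := by
  rw [EuclideanSpace.norm_eq, ← sqrt_sq (norm_nonneg x), ← sqrt_mul (Nat.cast_nonneg _)]
  refine sqrt_le_sqrt ?_
  calc ∑ i, ‖(WithLp.toLp 2 x) i‖ ^ 2 ≤ ∑ _i : ι, ‖x‖ ^ 2 :=
        sum_le_sum fun i _ ↦ pow_le_pow_left₀ (norm_nonneg _) (norm_le_pi_norm x i) 2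
    _ = Fintype.card ι * ‖x‖ ^ 2 := by simp

lemma norm_le_of_mem_segment_toLp {ι : Type*} [Fintype ι] {x y : ι → ℝ}
    {z : EuclideanSpace ℝ ι} (hz : z ∈ segment ℝ (WithLp.toLp 2 x) (WithLp.toLp 2 y)) :
    ‖z‖ ≤ √(Fintype.card ι) * max ‖x‖ ‖y‖ := by
  rw [segment_toLp] at hz
  obtain ⟨w, hw, rfl⟩ := hz
  exact (norm_toLp_two_le w).trans <| mul_le_mul_of_nonneg_left
    ((convexOn_norm convex_univ).le_max_of_mem_segment trivial trivial hw) (sqrt_nonneg _)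

lemma min_rpow_eq_max_rpow {a b γ : ℝ} (ha : 0 < a) (hb : 0 < b) (hγ : γ ≤ 0) :
    min (a ^ γ) (b ^ γ) = max a b ^ γ := by
  rcases le_total a b with h | h
  · rw [max_eq_right h, min_eq_right (rpow_le_rpow_of_nonpos ha h hγ)]
  · rw [max_eq_left h, min_eq_left (rpow_le_rpow_of_nonpos hb h hγ)]

lemma nrm_eq_norm (p : Fin 4 → ℝ) : nrm p = ‖WithLp.toLp 2 p‖ := by
  simp [nrm, EuclideanSpace.norm_eq, sqrt_eq_rpow]

lemma dot_eq_inner (p r : Fin 4 → ℝ) :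
    dot p r = inner ℝ (WithLp.toLp 2 p) (WithLp.toLp 2 r) := by
  simp [dot, EuclideanSpace.inner_toLp_toLp, dotProduct, mul_comm]

lemma nrmInf_eq_norm (p : Fin 4 → ℝ) : nrmInf p = ‖p‖ := by
  refine le_antisymm ?_ ((pi_norm_le_iff_of_nonneg ?_).2 fun i ↦ ?_)
  · simp only [nrmInf, max_le_iff, ← norm_eq_abs]
    exact ⟨⟨norm_le_pi_norm p 0, norm_le_pi_norm p 1⟩, norm_le_pi_norm p 2, norm_le_pi_norm p 3⟩
  · exact (abs_nonneg _).trans (le_max_left _ _ |>.trans (le_max_left _ _))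
  · fin_cases i <;> simp [nrmInf, norm_eq_abs]

lemma Gfun_sub_Gfun_sub_Gp (β : ℝ) (p pt : Fin 4 → ℝ) :
    Gfun β pt - Gfun β p - Gp β p (pt - p) =
      bregmanNormRpow β (WithLp.toLp 2 p) (WithLp.toLp 2 pt) := by
  simp only [Gfun, Gp, nrm_eq_norm, dot_eq_inner, bregmanNormRpow, WithLp.toLp_sub]

theorem G_strong_convexity_lt_two_general (β : ℝ) (hβ₁ : 1 < β) (hβ₂ : β < 2) (p pt : Fin 4 → ℝ)
    (hp : ∀ i, 0 ≤ p i) (hpt : ∀ i, 0 ≤ pt i) :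
    Gfun β pt - Gfun β p - Gp β p (pt - p)
      ≥ (2 : ℝ) ^ (β - 3) * β * (β - 1) *
          min (nrmInf p ^ (β - 2)) (nrmInf pt ^ (β - 2)) * nrm (p - pt) ^ 2 := by
  have hβ0 : β ≠ 0 := by positivity
  have hβ2 : β - 2 ≠ 0 := (sub_neg.2 hβ₂).ne
  rw [ge_iff_le, Gfun_sub_Gfun_sub_Gp, nrmInf_eq_norm, nrmInf_eq_norm]
  rcases eq_or_ne p 0 with rfl | hp0
  · rw [norm_zero, zero_rpow hβ2, min_eq_left (by positivity), WithLp.toLp_zero,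
      bregmanNormRpow_zero_left hβ0, mul_zero, zero_mul]
    positivity
  rcases eq_or_ne pt 0 with rfl | hpt0
  · rw [norm_zero, zero_rpow hβ2, min_eq_right (by positivity), WithLp.toLp_zero,
      bregmanNormRpow_zero_right hβ0, mul_zero, zero_mul]
    exact mul_nonneg (by linarith) (by positivity)
  have h0 : (0 : EuclideanSpace ℝ (Fin 4)) ∉ segment ℝ (WithLp.toLp 2 p) (WithLp.toLp 2 pt) := by
    rw [segment_toLp]
    rintro ⟨w, hw, hw0⟩
    rw [WithLp.toLp_eq_zero] at hw0
    exact zero_notMem_segment_of_nonneg hp hpt hp0 hpt0 (hw0 ▸ hw)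
  have hcard : √(Fintype.card (Fin 4) : ℝ) = 2 := by
    rw [Fintype.card_fin, show ((4 : ℕ) : ℝ) = 2 ^ 2 by norm_num, sqrt_sq zero_le_two]
  have key := le_bregmanNormRpow hβ₁.le hβ₂.le h0 fun z hz ↦ hcard ▸ norm_le_of_mem_segment_toLp hz
  rw [min_rpow_eq_max_rpow (norm_pos_iff.2 hp0) (norm_pos_iff.2 hpt0) (sub_neg.2 hβ₂).le,
    nrm_eq_norm, WithLp.toLp_sub, norm_sub_rev]
  convert key using 2
  rw [mul_rpow zero_le_two (le_max_of_le_left (norm_nonneg p)), show β - 2 = β - 3 + 1 by ring,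
    rpow_add_one two_ne_zero]
  ring

/-- For `1 < β < 2` and `p, pt ∈ (ℝ₊)⁴` with `p + pt ≠ 0`:
`G(pt) − G(p) − G_p(p)·(pt − p) ≥ 2^(β−3) β(β−1) min(|p|_∞^(β−2), |pt|_∞^(β−2)) |p − pt|²`. -/
theorem G_strong_convexity_lt_two (β : ℝ) (hβ₁ : 1 < β) (hβ₂ : β < 2) (p pt : Fin 4 → ℝ)
    (hp : ∀ i, 0 ≤ p i) (hpt : ∀ i, 0 ≤ pt i) (hne : p + pt ≠ 0) :
    Gfun β pt - Gfun β p - Gp β p (pt - p)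
      ≥ (2 : ℝ) ^ (β - 3) * β * (β - 1) *
          min (nrmInf p ^ (β - 2)) (nrmInf pt ^ (β - 2)) * nrm (p - pt) ^ 2 :=
  G_strong_convexity_lt_two_general β hβ₁ hβ₂ p pt hp hpt
end
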